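/- Let H = (H_p)_{p in G} be a G-cograded Hopf coquasigroup, τ_p : H_p → H_p a family of algebra endomorphisms, and δ_p : H_p → H_p a family of τ_p-derivations. Then for every p in G and h in H_1, writing Δ_{p,p⁻¹}(h) = h_(1,p) ⊗ h_(2,p⁻¹): δ_p(h_(1,p))S_{p⁻¹}(h_(2,p⁻¹)) + τ_p(h_(1,p))δ_p(S_{p⁻¹}(h_(2,p⁻¹))) = 0. -/
import Mathlib


open scoped TensorProduct

section Preliminaries

variable (k : Type*) [Field k] {G : Type*} [Group G]

/-- Transport along an equality of group indices, as a `k`-linear map. -/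
def lcast {H : G → Type*} [∀ p, AddCommMonoid (H p)] [∀ p, Module k (H p)]
    {p q : G} (e : p = q) : H p →ₗ[k] H q where
  toFun h := e ▸ h
  map_add' := by subst e; intros; rfl
  map_smul' := by subst e; intros; rfl

/-- A `G`-cograded Hopf coquasigroup over the field `k`. -/
structure GCHCQG (H : G → Type*) [∀ p, Ring (H p)] [∀ p, Algebra k (H p)] where
  /-- the comultiplication, a family of algebra maps `Δ_{p,q} : H_{pq} → H_p ⊗ H_q` -/
  Δ : ∀ p q : G, H (p * q) →ₐ[k] (H p ⊗[k] H q)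
  /-- the counit -/
  ε : H 1 →ₐ[k] k
  /-- the antipode, a family of `k`-linear anti-homomorphisms `S_p : H_p → H_{p⁻¹}` -/
  S : ∀ p : G, H p →ₗ[k] H p⁻¹
  S_one : ∀ p : G, S p (1 : H p) = 1
  S_mul : ∀ (p : G) (a b : H p), S p (a * b) = S p b * S p a
  /-- `(ε ⊗ id)Δ_{1,p} = id` -/
  counit_left : ∀ (p : G) (h : H (1 * p)),
    TensorProduct.lid k (H p)
      (TensorProduct.map ε.toLinearMap LinearMap.id (Δ 1 p h))
      = lcast k (one_mul p) h
  /-- `(id ⊗ ε)Δ_{p,1} = id` -/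
  counit_right : ∀ (p : G) (h : H (p * 1)),
    TensorProduct.rid k (H p)
      (TensorProduct.map LinearMap.id ε.toLinearMap (Δ p 1 h))
      = lcast k (mul_one p) h
  /-- `S_{q⁻¹}(h_(1,q⁻¹))h_(21,q) ⊗ h_(22,p) = 1_q ⊗ h` -/
  antipode_1 : ∀ (p q : G) (h : H (q⁻¹ * (q * p))),
    TensorProduct.map (LinearMap.mul' k (H q)) LinearMap.id
      (TensorProduct.map
        (TensorProduct.map ((lcast k (inv_inv q)).comp (S q⁻¹)) LinearMap.id)
        LinearMap.id
        ((TensorProduct.assoc k (H q⁻¹) (H q) (H p)).symm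
          (TensorProduct.map LinearMap.id (Δ q p).toLinearMap
            (Δ q⁻¹ (q * p) h))))
      = (1 : H q) ⊗ₜ[k] lcast k (inv_mul_cancel_left q p) h
  /-- `h_(1,q)S_{q⁻¹}(h_(21,q⁻¹)) ⊗ h_(22,p) = 1_q ⊗ h` -/
  antipode_2 : ∀ (p q : G) (h : H (q * (q⁻¹ * p))),
    TensorProduct.map (LinearMap.mul' k (H q)) LinearMap.id
      (TensorProduct.map
        (TensorProduct.map LinearMap.id ((lcast k (inv_inv q)).comp (S q⁻¹)))
        LinearMap.id
        ((TensorProduct.assoc k (H q) (H q⁻¹) (H p)).symm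
          (TensorProduct.map LinearMap.id (Δ q⁻¹ p).toLinearMap
            (Δ q (q⁻¹ * p) h))))
      = (1 : H q) ⊗ₜ[k] lcast k (mul_inv_cancel_left q p) h
  /-- `h_(11,p) ⊗ h_(12,q)S_{q⁻¹}(h_(2,q⁻¹)) = h ⊗ 1_q` -/
  antipode_3 : ∀ (p q : G) (h : H ((p * q) * q⁻¹)),
    TensorProduct.map LinearMap.id (LinearMap.mul' k (H q))
      (TensorProduct.map LinearMap.id
        (TensorProduct.map LinearMap.id ((lcast k (inv_inv q)).comp (S q⁻¹)))
        ((TensorProduct.assoc k (H p) (H q) (H q⁻¹))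
          (TensorProduct.map (Δ p q).toLinearMap LinearMap.id
            (Δ (p * q) q⁻¹ h))))
      = lcast k (mul_inv_cancel_right p q) h ⊗ₜ[k] (1 : H q)
  /-- `h_(11,p) ⊗ S_{q⁻¹}(h_(12,q⁻¹))h_(2,q) = h ⊗ 1_q` -/
  antipode_4 : ∀ (p q : G) (h : H ((p * q⁻¹) * q)),
    TensorProduct.map LinearMap.id (LinearMap.mul' k (H q))
      (TensorProduct.map LinearMap.id
        (TensorProduct.map ((lcast k (inv_inv q)).comp (S q⁻¹)) LinearMap.id)
        ((TensorProduct.assoc k (H p) (H q⁻¹) (H q))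
          (TensorProduct.map (Δ p q⁻¹).toLinearMap LinearMap.id
            (Δ (p * q⁻¹) q h))))
      = lcast k (inv_mul_cancel_right p q) h ⊗ₜ[k] (1 : H q)

/-- A realization of the Ore extension `A[y; τ, δ]` : a `k`-algebra `R` containing `A`
(via `ι`), free as a left `A`-module with basis `{yⁿ}`, with `y·a = τ(a)y + δ(a)`. -/
structure OreData (A R : Type*) [Ring A] [Algebra k A] [Ring R] [Algebra k R]
    (τ : A →ₐ[k] A) (δ : A →ₗ[k] A) where
  ι : A →ₐ[k] R
  y : R
  rel : ∀ a : A, y * ι a = ι (τ a) * y + ι (δ a)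
  free : ∀ f : ℕ →₀ A, (f.sum fun n a => ι a * y ^ n) = 0 → f = 0
  span : ∀ x : R, ∃ f : ℕ →₀ A, x = f.sum fun n a => ι a * y ^ n

/-- A group-cograded Hopf coquasigroup-Ore extension of `H` : the family
`R_p = H_p[y_p; τ_p, δ_p]` carrying a `G`-cograded Hopf coquasigroup structure
whose structure maps restrict on the subalgebras `H_p` to those of `H`. -/
structure GCHCQGOreExt {H : G → Type*} [∀ p, Ring (H p)] [∀ p, Algebra k (H p)]
    (HH : GCHCQG k H)
    (R : G → Type*) [∀ p, Ring (R p)] [∀ p, Algebra k (R p)]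
    (τ : ∀ p : G, H p →ₐ[k] H p) (δ : ∀ p : G, H p →ₗ[k] H p) where
  RR : GCHCQG k R
  ore : ∀ p : G, OreData k (H p) (R p) (τ p) (δ p)
  deriv : ∀ (p : G) (a b : H p), δ p (a * b) = δ p a * b + τ p a * δ p b
  compat_Δ : ∀ (p q : G) (h : H (p * q)),
    RR.Δ p q ((ore (p * q)).ι h)
      = TensorProduct.map ((ore p).ι).toLinearMap ((ore q).ι).toLinearMap (HH.Δ p q h)
  compat_ε : ∀ h : H (1 : G), RR.ε ((ore 1).ι h) = HH.ε h
  compat_S : ∀ (p : G) (h : H p), RR.S p ((ore p).ι h) = (ore p⁻¹).ι (HH.S p h)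

/-- A Hopf coquasigroup over the field `k`. -/
structure HopfCoquasigroup (H : Type*) [Ring H] [Algebra k H] where
  Δ : H →ₐ[k] H ⊗[k] H
  ε : H →ₐ[k] k
  S : H →ₗ[k] H
  counit_left : ∀ h : H,
    TensorProduct.lid k H (TensorProduct.map ε.toLinearMap LinearMap.id (Δ h)) = h
  counit_right : ∀ h : H,
    TensorProduct.rid k H (TensorProduct.map LinearMap.id ε.toLinearMap (Δ h)) = h
  antipode_1 : ∀ h : H,
    TensorProduct.map (LinearMap.mul' k H) LinearMap.id
      (TensorProduct.map (TensorProduct.map S LinearMap.id) LinearMap.id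
        ((TensorProduct.assoc k H H H).symm
          (TensorProduct.map LinearMap.id Δ.toLinearMap (Δ h))))
      = (1 : H) ⊗ₜ[k] h
  antipode_2 : ∀ h : H,
    TensorProduct.map (LinearMap.mul' k H) LinearMap.id
      (TensorProduct.map (TensorProduct.map LinearMap.id S) LinearMap.id
        ((TensorProduct.assoc k H H H).symm
          (TensorProduct.map LinearMap.id Δ.toLinearMap (Δ h))))
      = (1 : H) ⊗ₜ[k] h
  antipode_3 : ∀ h : H,
    TensorProduct.map LinearMap.id (LinearMap.mul' k H)
      (TensorProduct.map LinearMap.id (TensorProduct.map S LinearMap.id)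
        ((TensorProduct.assoc k H H H)
          (TensorProduct.map Δ.toLinearMap LinearMap.id (Δ h))))
      = h ⊗ₜ[k] (1 : H)
  antipode_4 : ∀ h : H,
    TensorProduct.map LinearMap.id (LinearMap.mul' k H)
      (TensorProduct.map LinearMap.id (TensorProduct.map LinearMap.id S)
        ((TensorProduct.assoc k H H H)
          (TensorProduct.map Δ.toLinearMap LinearMap.id (Δ h))))
      = h ⊗ₜ[k] (1 : H)

end Preliminaries

section Aux

variable (k : Type*) [Field k] {G : Type*} [Group G]
variable {H : G → Type*} [∀ p, Ring (H p)] [∀ p, Algebra k (H p)]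

lemma lcast_lcast {p q r : G} (e : p = q) (e' : q = r) (h : H p) :
    lcast k e' (lcast (H := H) k e h) = lcast k (e.trans e') h := by
  subst e; subst e'; rfl

lemma lcast_self {p : G} (e : p = p) (h : H p) : lcast (H := H) k e h = h := rfl

lemma lcast_rfl_eq_id (p : G) : lcast (H := H) k (rfl : p = p) = LinearMap.id := rfl

lemma Dcast (W : GCHCQG k H) {p q : G} (r : G) (e : p = q) (h : H (p * r)) :
    W.Δ q r (lcast k (congrArg (· * r) e) h)
      = TensorProduct.map (lcast k e) LinearMap.id (W.Δ p r h) := by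
  subst e
  rw [lcast_self, lcast_rfl_eq_id, TensorProduct.map_id, LinearMap.id_apply]

lemma der_tensor (p : G) (τ : H p →ₐ[k] H p) (δ : H p →ₗ[k] H p)
    (hder : ∀ a b : H p, δ (a * b) = δ a * b + τ a * δ b)
    (S' : H p⁻¹ →ₗ[k] H p) (t : H p ⊗[k] H p⁻¹) :
    LinearMap.mul' k (H p) (TensorProduct.map δ S' t)
      + LinearMap.mul' k (H p) (TensorProduct.map τ.toLinearMap (δ.comp S') t)
      = δ (LinearMap.mul' k (H p) (TensorProduct.map LinearMap.id S' t)) := by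
  induction t with
  | zero => simp
  | tmul a b => simp [LinearMap.mul'_apply, hder]
  | add x y hx hy =>
      simp only [map_add]
      rw [← hx, ← hy]; abel

lemma comm1 {V W' : Type*} [AddCommGroup V] [Module k V] [AddCommGroup W'] [Module k W']
    (ε : H 1 →ₗ[k] k) (M : V →ₗ[k] W') (t : H 1 ⊗[k] V) :
    TensorProduct.lid k W'
        (TensorProduct.map ε LinearMap.id (TensorProduct.map LinearMap.id M t))
      = M (TensorProduct.lid k V (TensorProduct.map ε LinearMap.id t)) := by
  induction t with
  | zero => simp
  | tmul a v => simp
  | add x y hx hy => simp [hx, hy]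

set_option synthInstance.maxHeartbeats 1000000 in
set_option maxHeartbeats 1000000 in
lemma comm2 (W : GCHCQG k H) (p : G) (t : H (1 * p) ⊗[k] H p⁻¹) :
    TensorProduct.lid k (H p ⊗[k] H p⁻¹)
        (TensorProduct.map W.ε.toLinearMap LinearMap.id
          ((TensorProduct.assoc k (H 1) (H p) (H p⁻¹))
            (TensorProduct.map (W.Δ 1 p).toLinearMap LinearMap.id t)))
      = TensorProduct.map (lcast k (one_mul p)) LinearMap.id t := by
  induction t with
  | zero => simp
  | tmul u v =>
      have sub : ∀ s : H 1 ⊗[k] H p,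
          TensorProduct.lid k (H p ⊗[k] H p⁻¹)
              (TensorProduct.map W.ε.toLinearMap LinearMap.id
                ((TensorProduct.assoc k (H 1) (H p) (H p⁻¹)) (s ⊗ₜ[k] v)))
            = (TensorProduct.lid k (H p)
                (TensorProduct.map W.ε.toLinearMap LinearMap.id s)) ⊗ₜ[k] v := by
        intro s
        induction s with
        | zero => simp
        | tmul a b => simp [TensorProduct.smul_tmul']
        | add x y hx hy =>
            simp only [TensorProduct.add_tmul, map_add, hx, hy]
      simp only [TensorProduct.map_tmul, LinearMap.id_apply, sub,
        AlgHom.toLinearMap_apply, W.counit_left]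
  | add x y hx hy => simp [hx, hy]

end Aux

/-- relation (3.23): For algebra endomorphisms `τ_p` and
`τ_p`-derivations `δ_p`, for every `h ∈ H_1`:
`δ_p(h_(1,p))S_{p⁻¹}(h_(2,p⁻¹)) + τ_p(h_(1,p))δ_p(S_{p⁻¹}(h_(2,p⁻¹))) = 0`. -/
theorem statement14 (k : Type*) [Field k] {G : Type*} [Group G]
    (H : G → Type*) [∀ p, Ring (H p)] [∀ p, Algebra k (H p)]
    (W : GCHCQG k H)
    (τ : ∀ p : G, H p →ₐ[k] H p)
    (δ : ∀ p : G, H p →ₗ[k] H p)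
    (hder : ∀ (p : G) (a b : H p), δ p (a * b) = δ p a * b + τ p a * δ p b) :
    ∀ (p : G) (h : H (1 : G)),
      LinearMap.mul' k (H p)
          (TensorProduct.map (δ p) ((lcast k (inv_inv p)).comp (W.S p⁻¹))
            (W.Δ p p⁻¹ (lcast k (mul_inv_cancel p).symm h)))
        + LinearMap.mul' k (H p)
            (TensorProduct.map (τ p).toLinearMap
              ((δ p).comp ((lcast k (inv_inv p)).comp (W.S p⁻¹)))
              (W.Δ p p⁻¹ (lcast k (mul_inv_cancel p).symm h)))
        = 0 := by
  intro p h
  have key : LinearMap.mul' k (H p)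
      (TensorProduct.map LinearMap.id ((lcast k (inv_inv p)).comp (W.S p⁻¹))
        (W.Δ p p⁻¹ (lcast k (mul_inv_cancel p).symm h)))
      = W.ε h • (1 : H p) := by
    have e2 : p * p⁻¹ = (1 : G) * p * p⁻¹ := by rw [one_mul]
    set h' : H (p * p⁻¹) := lcast k (mul_inv_cancel p).symm h with hh'
    set h₀ : H ((1 : G) * p * p⁻¹) := lcast k e2 h' with hh0
    have X := W.antipode_3 1 p h₀
    have X' := congrArg (fun t => TensorProduct.lid k (H p)
        (TensorProduct.map W.ε.toLinearMap LinearMap.id t)) X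
    -- RHS of X'
    have hrhs : TensorProduct.lid k (H p)
        (TensorProduct.map W.ε.toLinearMap LinearMap.id
          (lcast k (mul_inv_cancel_right 1 p) h₀ ⊗ₜ[k] (1 : H p)))
        = W.ε h • (1 : H p) := by
      have : lcast (H := H) k (mul_inv_cancel_right 1 p) h₀ = h := by
        rw [hh0, hh', lcast_lcast, lcast_lcast, lcast_self]
      rw [this]
      simp
    -- LHS of X'
    have hc : (TensorProduct.map (LinearMap.id : H 1 →ₗ[k] H 1) (LinearMap.mul' k (H p))).comp
        (TensorProduct.map (LinearMap.id : H 1 →ₗ[k] H 1)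
          (TensorProduct.map (LinearMap.id : H p →ₗ[k] H p)
            ((lcast k (inv_inv p)).comp (W.S p⁻¹))))
        = TensorProduct.map (LinearMap.id : H 1 →ₗ[k] H 1)
            ((LinearMap.mul' k (H p)).comp
              (TensorProduct.map (LinearMap.id : H p →ₗ[k] H p)
                ((lcast k (inv_inv p)).comp (W.S p⁻¹)))) := by
      rw [← TensorProduct.map_comp]; rfl
    have hlhs : TensorProduct.lid k (H p)
        (TensorProduct.map W.ε.toLinearMap LinearMap.id
          (TensorProduct.map LinearMap.id (LinearMap.mul' k (H p))
            (TensorProduct.map LinearMap.id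
              (TensorProduct.map LinearMap.id ((lcast k (inv_inv p)).comp (W.S p⁻¹)))
              ((TensorProduct.assoc k (H 1) (H p) (H p⁻¹))
                (TensorProduct.map (W.Δ 1 p).toLinearMap LinearMap.id
                  (W.Δ (1 * p) p⁻¹ h₀))))))
        = LinearMap.mul' k (H p)
            (TensorProduct.map LinearMap.id ((lcast k (inv_inv p)).comp (W.S p⁻¹))
              (W.Δ p p⁻¹ h')) := by
      have step1 : TensorProduct.map LinearMap.id (LinearMap.mul' k (H p))
            (TensorProduct.map LinearMap.id
              (TensorProduct.map LinearMap.id ((lcast k (inv_inv p)).comp (W.S p⁻¹)))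
              ((TensorProduct.assoc k (H 1) (H p) (H p⁻¹))
                (TensorProduct.map (W.Δ 1 p).toLinearMap LinearMap.id
                  (W.Δ (1 * p) p⁻¹ h₀))))
          = TensorProduct.map LinearMap.id
              ((LinearMap.mul' k (H p)).comp
                (TensorProduct.map LinearMap.id ((lcast k (inv_inv p)).comp (W.S p⁻¹))))
              ((TensorProduct.assoc k (H 1) (H p) (H p⁻¹))
                (TensorProduct.map (W.Δ 1 p).toLinearMap LinearMap.id
                  (W.Δ (1 * p) p⁻¹ h₀))) := by
        rw [← hc]; rfl
      rw [step1, comm1, comm2]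
      have e1 : (1 : G) * p = p := one_mul p
      have : TensorProduct.map (lcast k (one_mul p)) LinearMap.id
            (W.Δ (1 * p) p⁻¹ h₀) = W.Δ p p⁻¹ h' := by
        rw [← Dcast k W p⁻¹ (one_mul p) h₀, hh0, hh', lcast_lcast, lcast_lcast]
      rw [this]
      rfl
    rw [hlhs, hrhs] at X'
    exact X'
  rw [der_tensor k p (τ p) (δ p) (hder p), key, map_smul]
  have hδ1 : δ p (1 : H p) = 0 := by
    have h11 := hder p 1 1
    simp only [mul_one, one_mul, map_one] at h11
    exact (left_eq_add.mp h11)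
  rw [hδ1, smul_zero]
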